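/- arXiv:2203.02326 — 8 statements merged into one kernel-verified Lean document; each statement's English description precedes it below -/
import Mathlib

section
/- Let a > b + 1, 0 ≤ b ≤ 1, λ = (a + √(a² − 4b))/2, and σ ∈ {−1, +1}. Let A_σ be the 2×2 matrix with rows (−σa, −b) and (1, 0) (the derivative of the affine branch Λ_σ of the Lozi map). If v = (x, y) ∈ ℝ² satisfies |y| ≤ |x|/λ (v lies in the universal unstable cone K^U), then A_σ·v ∈ K^U and ‖A_σ·v‖ ≥ λ‖v‖ in the sup-norm (equivalently in any L^n norm, n ∈ {1, 2, ∞}). -/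
/-!
Writing `λ` for the larger root of `t² - a t + b`, the identity `a - b/λ = λ` gives, for
`λ|y| ≤ |x|`, the estimate `|σ a x + b y| ≥ a|x| - b|y| ≥ (a - b/λ)|x| = λ|x|`. Since the second
coordinate of `A_σ (x, y)` is `x`, this single inequality yields both the cone invariance and the
expansion in the sup-norm.
-/

namespace Lozi

lemma sq_sub_four_mul_pos {a b : ℝ} (hab : b + 1 < a) (hb : 0 ≤ b) : 0 < a ^ 2 - 4 * b := by
  nlinarith [sq_nonneg (b - 1)]

lemma larger_root_sq {a b : ℝ} (hd : 0 ≤ a ^ 2 - 4 * b) :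
    ((a + √(a ^ 2 - 4 * b)) / 2) ^ 2 = a * ((a + √(a ^ 2 - 4 * b)) / 2) - b := by
  nlinarith [Real.sq_sqrt hd]

lemma larger_root_pos {a b : ℝ} (ha : 0 < a) : 0 < (a + √(a ^ 2 - 4 * b)) / 2 := by
  positivity

lemma expansion_first_coord {a b σ l x y : ℝ} (hσ : |σ| = 1) (hb : 0 ≤ b) (hl : 0 < l)
    (hroot : l ^ 2 = a * l - b) (hxy : l * |y| ≤ |x|) :
    l * |x| ≤ |-σ * a * x - b * y| := by
  have ha : 0 ≤ a := by nlinarith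
  have hlower : l * |x| ≤ a * |x| - b * |y| := by
    refine le_of_mul_le_mul_left ?_ hl
    nlinarith [abs_nonneg x, mul_le_mul_of_nonneg_left hxy hb]
  calc l * |x| ≤ a * |x| - b * |y| := hlower
    _ = |σ * a * x| - |b * y| := by simp only [abs_mul, hσ, abs_of_nonneg ha, abs_of_nonneg hb,
        one_mul]
    _ ≤ |σ * a * x + b * y| := abs_sub_abs_le_abs_add _ _
    _ = |-σ * a * x - b * y| := by rw [← abs_neg]; ring_nf

lemma cone_step {a b σ l x y : ℝ} (hσ : |σ| = 1) (hb : 0 ≤ b) (hl : 0 < l)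
    (hroot : l ^ 2 = a * l - b) (hxy : |y| ≤ |x| / l) :
    |x| ≤ |-σ * a * x - b * y| / l ∧ l * max |x| |y| ≤ max |-σ * a * x - b * y| |x| := by
  have hxy' : l * |y| ≤ |x| := by rwa [le_div_iff₀ hl, mul_comm] at hxy
  have hexp := expansion_first_coord hσ hb hl hroot hxy'
  refine ⟨by rwa [le_div_iff₀ hl, mul_comm], ?_⟩
  rw [mul_max_of_nonneg _ _ hl.le]
  exact max_le_max hexp hxy'

end Lozi

open Lozi in
theorem lozi_universal_unstable_cone_general (a b : ℝ) (hab : a > b + 1) (hb0 : 0 ≤ b)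
    (σ : ℝ) (hσ : σ = -1 ∨ σ = 1) (x y : ℝ) :
    let l := (a + Real.sqrt (a ^ 2 - 4 * b)) / 2
    let A : Matrix (Fin 2) (Fin 2) ℝ := !![-σ * a, -b; 1, 0]
    let w := A.mulVec ![x, y]
    |y| ≤ |x| / l →
      |w 1| ≤ |w 0| / l ∧ l * max |x| |y| ≤ max |w 0| |w 1| := by
  intro l A w hxy
  have hd := (sq_sub_four_mul_pos hab hb0).le
  have hσ1 : |σ| = 1 := by rcases hσ with rfl | rfl <;> simp
  have hw : w = ![-σ * a * x - b * y, x] := by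
    ext i; fin_cases i <;> simp [w, A, sub_eq_add_neg, mul_comm]
  rw [hw]
  exact cone_step hσ1 hb0 (larger_root_pos (by linarith)) (larger_root_sq hd) hxy

theorem lozi_universal_unstable_cone (a b : ℝ) (hab : a > b + 1) (hb0 : 0 ≤ b) (hb1 : b ≤ 1)
    (σ : ℝ) (hσ : σ = -1 ∨ σ = 1) (x y : ℝ) :
    let l := (a + Real.sqrt (a ^ 2 - 4 * b)) / 2
    let A : Matrix (Fin 2) (Fin 2) ℝ := !![-σ * a, -b; 1, 0]
    let w := A.mulVec ![x, y]
    |y| ≤ |x| / l →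
      |w 1| ≤ |w 0| / l ∧ l * max |x| |y| ≤ max |w 0| |w 1| :=
  lozi_universal_unstable_cone_general a b hab hb0 σ hσ x y
end

section
/- Let a > b + 1, 0 ≤ b ≤ 1, λ = (a + √(a² − 4b))/2, μ = b/λ, and σ ∈ {−1, +1}. Let A_σ = [[−σa, −b],[1, 0]] and suppose b > 0 so that A_σ is invertible. If v = (x, y) ∈ ℝ² satisfies |x| ≤ (b/λ)|y| (v lies in the universal stable cone K^S), then A_σ⁻¹·v ∈ K^S and ‖v‖ ≤ μ‖A_σ⁻¹·v‖ in the sup-norm. -/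
/-!
Since `λ² - aλ + b = 0`, we have `a - b/λ = λ`. For `v = (x, y)` in the cone,
`A_σ⁻¹ v = (y, -(x + σ a y)/b)` and the reverse triangle inequality gives
`|x + σ a y| ≥ a|y| - |x| ≥ (a - b/λ)|y| = λ|y|`, i.e. `|y| ≤ (b/λ)|(A_σ⁻¹ v)₂|`:
this is both the cone invariance and, as `b/λ ≤ 1` makes `|y|` the sup-norm of `v`,
the expansion estimate.
-/

open Matrix

theorem inv_mulVec_companion (c b x y : ℝ) (hb : b ≠ 0) :
    (!![c, -b; 1, 0])⁻¹ *ᵥ ![x, y] = ![y, (c * y - x) / b] := by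
  have hinv : (!![c, -b; 1, 0])⁻¹ = !![0, 1; -1 / b, c / b] := by
    apply inv_eq_left_inv
    rw [mul_fin_two, one_fin_two]
    congr <;> field_simp <;> ring
  rw [hinv, mulVec_fin_two]
  simp only [of_apply, cons_val', cons_val_zero, cons_val_one, empty_val', cons_val_fin_one]
  congr 2 <;> field_simp <;> ring

theorem sub_one_le_larger_root (a b : ℝ) (hb : b ≤ a - 1) :
    a - 1 ≤ (a + √(a ^ 2 - 4 * b)) / 2 := by
  suffices a - 2 ≤ √(a ^ 2 - 4 * b) by linarith
  calc a - 2 ≤ |a - 2| := le_abs_self _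
    _ = √((a - 2) ^ 2) := (Real.sqrt_sq_eq_abs _).symm
    _ ≤ √(a ^ 2 - 4 * b) := Real.sqrt_le_sqrt (by nlinarith)

theorem larger_root_sq (a b : ℝ) (hd : 4 * b ≤ a ^ 2) :
    ((a + √(a ^ 2 - 4 * b)) / 2) ^ 2 + b = a * ((a + √(a ^ 2 - 4 * b)) / 2) := by
  have hsq : √(a ^ 2 - 4 * b) ^ 2 = a ^ 2 - 4 * b := Real.sq_sqrt (by linarith)
  linear_combination hsq / 4

theorem mul_abs_le_abs_sub_of_abs_le (b c l x y : ℝ) (hl : 0 < l)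
    (hroot : l ^ 2 + b = |c| * l) (hxy : |x| ≤ b / l * |y|) :
    l * |y| ≤ |c * y - x| := by
  have hl' : |c| - b / l = l := by field_simp; linarith
  calc l * |y| = (|c| - b / l) * |y| := by rw [hl']
    _ = |c| * |y| - b / l * |y| := by ring
    _ ≤ |c * y| - |x| := by rw [abs_mul]; linarith
    _ ≤ |c * y - x| := abs_sub_abs_le_abs_sub _ _

theorem abs_le_div_mul_abs_div (b c l x y : ℝ) (hb : 0 < b) (hl : 0 < l)
    (hroot : l ^ 2 + b = |c| * l) (hxy : |x| ≤ b / l * |y|) :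
    |y| ≤ b / l * |(c * y - x) / b| := by
  have key := mul_abs_le_abs_sub_of_abs_le b c l x y hl hroot hxy
  have hcancel : b / l * (|c * y - x| / b) = |c * y - x| / l := by field_simp
  rw [abs_div, abs_of_pos hb, hcancel, le_div_iff₀ hl]
  linarith

theorem max_abs_le_mul_max_abs {m x y z : ℝ} (hm0 : 0 ≤ m) (hm1 : m ≤ 1)
    (hxy : |x| ≤ m * |y|) (hyz : |y| ≤ m * |z|) : max |x| |y| ≤ m * max |y| |z| := by
  have hx : |x| ≤ |y| := hxy.trans (mul_le_of_le_one_left (abs_nonneg y) hm1)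
  calc max |x| |y| = |y| := max_eq_right hx
    _ ≤ m * |z| := hyz
    _ ≤ m * max |y| |z| := mul_le_mul_of_nonneg_left (le_max_right _ _) hm0

theorem lozi_universal_stable_cone_general (a b : ℝ) (hab : a > b + 1) (hb0 : 0 < b)
    (σ : ℝ) (hσ : σ = -1 ∨ σ = 1) (x y : ℝ) :
    let l := (a + Real.sqrt (a ^ 2 - 4 * b)) / 2
    let μ := b / l
    let A : Matrix (Fin 2) (Fin 2) ℝ := !![-σ * a, -b; 1, 0]
    let w := A⁻¹.mulVec ![x, y]
    |x| ≤ (b / l) * |y| →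
      |w 0| ≤ (b / l) * |w 1| ∧ max |x| |y| ≤ μ * max |w 0| |w 1| := by
  intro l μ A w hxy
  have hbl : b < l := by
    have : a - 1 ≤ l := sub_one_le_larger_root a b (by linarith)
    linarith
  have hl : 0 < l := hb0.trans hbl
  have habs : |-σ * a| = a := by
    rcases hσ with rfl | rfl <;> simp [abs_of_pos (by linarith : 0 < a)]
  have hroot : l ^ 2 + b = |-σ * a| * l := by
    rw [habs]; exact larger_root_sq a b (by nlinarith [sq_nonneg (b - 1)])
  have hw : w = ![y, (-σ * a * y - x) / b] := inv_mulVec_companion _ _ x y hb0.ne'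
  have hw0 : w 0 = y := by simp [hw]
  have hcone : |y| ≤ b / l * |w 1| := by
    simpa [hw] using abs_le_div_mul_abs_div b _ l x y hb0 hl hroot hxy
  refine ⟨hw0 ▸ hcone, ?_⟩
  rw [hw0]
  exact max_abs_le_mul_max_abs (by positivity) ((div_le_one hl).mpr hbl.le) hxy hcone

theorem lozi_universal_stable_cone (a b : ℝ) (hab : a > b + 1) (hb0 : 0 < b) (hb1 : b ≤ 1)
    (σ : ℝ) (hσ : σ = -1 ∨ σ = 1) (x y : ℝ) :
    let l := (a + Real.sqrt (a ^ 2 - 4 * b)) / 2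
    let μ := b / l
    let A : Matrix (Fin 2) (Fin 2) ℝ := !![-σ * a, -b; 1, 0]
    let w := A⁻¹.mulVec ![x, y]
    |x| ≤ (b / l) * |y| →
      |w 0| ≤ (b / l) * |w 1| ∧ max |x| |y| ≤ μ * max |w 0| |w 1| :=
  lozi_universal_stable_cone_general a b hab hb0 σ hσ x y
end

section
/- Suppose a > b + 1 and 0 ≤ b ≤ 1 and let I = (I₁, …, I_M) be a finite word in {−1, +1}. Let Λ_I be the composition Λ_{I_M} ∘ ⋯ ∘ Λ_{I₁} of the affine branches Λ_σ(x,y) = (−σax − by + (a−b−1), x). Then the linear part A = DΛ_I satisfies ‖Aᵐ v‖ ≥ λ^{Mm}‖v‖ for every m ≥ 0 and every v in the universal unstable cone K^U; in particular the spectral radius of A is at least λ^M, where λ = (a + √(a² − 4b))/2. -/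
/-!
Every branch matrix `!![-σ a, -b; 1, 0]` maps the cone `|y| ≤ |x| / λ` into itself and stretches
it by `λ` in the sup norm: `|-σ a x - b y| ≥ a |x| - b |x| / λ = λ |x|`, because `λ² = a λ - b`.
Products of `M` such matrices, and their powers, therefore stretch the cone by `λ ^ M` per
iterate, so `‖A ^ m‖ ≥ λ ^ (M m)` and Gelfand's formula gives a point of the spectrum of modulus
at least `λ ^ M`.
-/

open Filter Matrix

attribute [local instance] Matrix.linftyOpNormedAddCommGroup Matrix.linftyOpNormedRing
  Matrix.linftyOpNormedAlgebra

theorem spectrum.exists_le_norm_of_pow_le_norm_pow {A : Type*} [NormedRing A] [NormedAlgebra ℂ A]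
    [CompleteSpace A] [Nontrivial A] (a : A) {c : ℝ} (hc : 0 ≤ c)
    (hpow : ∀ n : ℕ, c ^ n ≤ ‖a ^ n‖) : ∃ ν ∈ spectrum ℂ a, c ≤ ‖ν‖ := by
  have hρ : ENNReal.ofReal c ≤ spectralRadius ℂ a := by
    refine ge_of_tendsto (spectrum.pow_norm_pow_one_div_tendsto_nhds_spectralRadius a) ?_
    filter_upwards [eventually_ne_atTop 0] with n hn
    refine ENNReal.ofReal_le_ofReal ?_
    calc c = (c ^ n) ^ (1 / n : ℝ) := by rw [one_div, Real.pow_rpow_inv_natCast hc hn]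
      _ ≤ ‖a ^ n‖ ^ (1 / n : ℝ) := by gcongr; exact hpow n
  obtain ⟨ν, hν, hνρ⟩ := spectrum.exists_nnnorm_eq_spectralRadius a
  refine ⟨ν, hν, ?_⟩
  rwa [← hνρ, ← enorm_eq_nnnorm, ← ofReal_norm, ENNReal.ofReal_le_ofReal_iff (norm_nonneg _)] at hρ

theorem pi_norm_fin_two (v : Fin 2 → ℝ) : ‖v‖ = max |v 0| |v 1| := by
  refine le_antisymm ((pi_norm_le_iff_of_nonneg (by positivity)).2 fun i => ?_) ?_
  · fin_cases i
    · exact le_max_left _ _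
    · exact le_max_right _ _
  · exact max_le (norm_le_pi_norm v 0) (norm_le_pi_norm v 1)

namespace Matrix

theorem linfty_opNorm_map_ofReal {m n : Type*} [Fintype m] [Fintype n] (A : Matrix m n ℝ) :
    ‖A.map (Complex.ofReal : ℝ → ℂ)‖ = ‖A‖ := by
  simp [linfty_opNorm_def]

variable {n : Type*} [Fintype n]

def IsExpandingOn (K : Set (n → ℝ)) (c : ℝ) (A : Matrix n n ℝ) : Prop :=
  ∀ v ∈ K, A *ᵥ v ∈ K ∧ c * ‖v‖ ≤ ‖A *ᵥ v‖

namespace IsExpandingOn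

variable {K : Set (n → ℝ)} {c d : ℝ} {A B : Matrix n n ℝ}

theorem one [DecidableEq n] : IsExpandingOn K 1 (1 : Matrix n n ℝ) := fun v hv => by
  simpa using hv

theorem mul (hA : IsExpandingOn K c A) (hB : IsExpandingOn K d B) (hc : 0 ≤ c) :
    IsExpandingOn K (c * d) (A * B) := fun v hv => by
  obtain ⟨hBv, hdB⟩ := hB v hv
  obtain ⟨hABv, hcA⟩ := hA _ hBv
  rw [← mulVec_mulVec]
  refine ⟨hABv, ?_⟩
  calc c * d * ‖v‖ = c * (d * ‖v‖) := mul_assoc ..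
    _ ≤ c * ‖B *ᵥ v‖ := by gcongr
    _ ≤ ‖A *ᵥ (B *ᵥ v)‖ := hcA

theorem list_prod [DecidableEq n] {L : List (Matrix n n ℝ)} (hL : ∀ M ∈ L, IsExpandingOn K c M)
    (hc : 0 ≤ c) : IsExpandingOn K (c ^ L.length) L.prod := by
  induction L with
  | nil => simpa using one
  | cons M L ih =>
    rw [List.prod_cons, List.length_cons, pow_succ']
    exact (hL M List.mem_cons_self).mul (ih fun N hN => hL N (List.mem_cons_of_mem _ hN)) hc

theorem pow [DecidableEq n] (hA : IsExpandingOn K c A) (hc : 0 ≤ c) (m : ℕ) :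
    IsExpandingOn K (c ^ m) (A ^ m) := by
  simpa using list_prod (L := List.replicate m A) (by simpa using fun _ => hA) hc

theorem pow_le_norm_pow_map_ofReal [DecidableEq n] (hA : IsExpandingOn K c A) (hc : 0 ≤ c)
    {v : n → ℝ} (hv : v ∈ K) (hv0 : v ≠ 0) (m : ℕ) :
    c ^ m ≤ ‖A.map (Complex.ofReal : ℝ → ℂ) ^ m‖ := by
  have hmap : A.map Complex.ofReal ^ m = (A ^ m).map Complex.ofReal :=
    (map_pow Complex.ofRealHom.mapMatrix A m).symm
  rw [hmap, linfty_opNorm_map_ofReal]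
  refine le_of_mul_le_mul_right ?_ (norm_pos_iff.mpr hv0)
  exact (hA.pow hc m v hv).2.trans (linfty_opNorm_mulVec _ _)

end IsExpandingOn

end Matrix

theorem one_le_add_sqrt_div_two {a b : ℝ} (hab : b + 1 ≤ a) : 1 ≤ (a + √(a ^ 2 - 4 * b)) / 2 := by
  have : 2 - a ≤ √(a ^ 2 - 4 * b) := (le_abs_self _).trans (Real.abs_le_sqrt (by nlinarith))
  linarith

theorem add_sqrt_div_two_sq {a b : ℝ} (hd : 0 ≤ a ^ 2 - 4 * b) :
    ((a + √(a ^ 2 - 4 * b)) / 2) ^ 2 = a * ((a + √(a ^ 2 - 4 * b)) / 2) - b := by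
  nlinarith [Real.sq_sqrt hd]

def loziMatrix (a b σ : ℝ) : Matrix (Fin 2) (Fin 2) ℝ := !![-σ * a, -b; 1, 0]

def unstableCone (l : ℝ) : Set (Fin 2 → ℝ) := {v | |v 1| ≤ |v 0| / l}

theorem loziMatrix_mulVec_zero (a b σ : ℝ) (v : Fin 2 → ℝ) :
    (loziMatrix a b σ *ᵥ v) 0 = -σ * a * v 0 - b * v 1 := by
  simp [loziMatrix, vecHead, vecTail]; ring

theorem loziMatrix_mulVec_one (a b σ : ℝ) (v : Fin 2 → ℝ) : (loziMatrix a b σ *ᵥ v) 1 = v 0 := by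
  simp [loziMatrix, vecHead]

theorem norm_eq_abs_of_mem_unstableCone {l : ℝ} (hl : 1 ≤ l) {v : Fin 2 → ℝ}
    (hv : v ∈ unstableCone l) : ‖v‖ = |v 0| := by
  rw [pi_norm_fin_two, max_eq_left (hv.trans (div_le_self (abs_nonneg _) hl))]

section Lozi

variable {a b σ l : ℝ}

theorem mul_abs_le_abs_loziMatrix_mulVec_zero (hb : 0 ≤ b) (hσ : 1 ≤ |σ|) (hl : 0 < l)
    (hroot : l ^ 2 = a * l - b) {v : Fin 2 → ℝ} (hv : v ∈ unstableCone l) :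
    l * |v 0| ≤ |(loziMatrix a b σ *ᵥ v) 0| := by
  have hv' : l * |v 1| ≤ |v 0| := (le_div_iff₀' hl).1 hv
  have hσa : a * |v 0| ≤ |-σ * a * v 0| := by
    rw [abs_mul, abs_mul, abs_neg]
    gcongr
    exact (le_abs_self a).trans (le_mul_of_one_le_left (abs_nonneg a) hσ)
  have hbv : |b * v 1| = b * |v 1| := by rw [abs_mul, abs_of_nonneg hb]
  refine le_of_mul_le_mul_left ?_ hl
  rw [loziMatrix_mulVec_zero]
  calc l * (l * |v 0|) = a * l * |v 0| - b * |v 0| := by rw [← mul_assoc, ← sq, hroot]; ring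
    _ ≤ a * l * |v 0| - b * (l * |v 1|) := by gcongr
    _ = l * (a * |v 0| - |b * v 1|) := by rw [hbv]; ring
    _ ≤ l * (|-σ * a * v 0| - |b * v 1|) := by gcongr
    _ ≤ l * |-σ * a * v 0 - b * v 1| := by gcongr; exact abs_sub_abs_le_abs_sub _ _

theorem loziMatrix_isExpandingOn_unstableCone (hb : 0 ≤ b) (hσ : 1 ≤ |σ|) (hl : 1 ≤ l)
    (hroot : l ^ 2 = a * l - b) : (loziMatrix a b σ).IsExpandingOn (unstableCone l) l := by
  intro v hv
  have hl0 : 0 < l := by linarith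
  have hstretch := mul_abs_le_abs_loziMatrix_mulVec_zero hb hσ hl0 hroot hv
  have hcone : loziMatrix a b σ *ᵥ v ∈ unstableCone l :=
    (le_div_iff₀' hl0).2 (by rw [loziMatrix_mulVec_one]; exact hstretch)
  refine ⟨hcone, ?_⟩
  rw [norm_eq_abs_of_mem_unstableCone hl hv, norm_eq_abs_of_mem_unstableCone hl hcone]
  exact hstretch

end Lozi

theorem lozi_word_expansion_and_spectral_radius_general (a b : ℝ) (hab : a > b + 1) (hb0 : 0 ≤ b)
    (I : List ℝ) (hI : ∀ σ ∈ I, σ = -1 ∨ σ = 1) :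
    let l := (a + Real.sqrt (a ^ 2 - 4 * b)) / 2
    let A : Matrix (Fin 2) (Fin 2) ℝ :=
      (I.reverse.map (fun σ => !![-σ * a, -b; 1, 0])).prod
    (∀ m : ℕ, ∀ v : Fin 2 → ℝ, |v 1| ≤ |v 0| / l →
      l ^ (I.length * m) * max |v 0| |v 1| ≤
        max |((A ^ m).mulVec v) 0| |((A ^ m).mulVec v) 1|) ∧
    (∃ ν : ℂ, ν ∈ spectrum ℂ (A.map (Complex.ofReal : ℝ → ℂ)) ∧
      l ^ I.length ≤ ‖ν‖) := by
  intro l A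
  have hl : 1 ≤ l := one_le_add_sqrt_div_two hab.le
  have hl0 : 0 ≤ l := zero_le_one.trans hl
  have hroot : l ^ 2 = a * l - b :=
    add_sqrt_div_two_sq (by nlinarith [sq_nonneg (b - 1)])
  have hA : A.IsExpandingOn (unstableCone l) (l ^ I.length) := by
    have hletters : ∀ M ∈ I.reverse.map (loziMatrix a b), M.IsExpandingOn (unstableCone l) l := by
      simp only [List.mem_map, List.mem_reverse]
      rintro _ ⟨σ, hσ, rfl⟩
      refine loziMatrix_isExpandingOn_unstableCone hb0 ?_ hl hroot
      rcases hI σ hσ with rfl | rfl <;> simp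
    have := IsExpandingOn.list_prod hletters hl0
    rwa [List.length_map, List.length_reverse] at this
  refine ⟨fun m v hv => ?_, ?_⟩
  · have := (hA.pow (pow_nonneg hl0 _) m v hv).2
    rwa [← pow_mul, pi_norm_fin_two, pi_norm_fin_two] at this
  · have he₀ : (![1, 0] : Fin 2 → ℝ) ∈ unstableCone l := by simp [unstableCone, hl0]
    exact spectrum.exists_le_norm_of_pow_le_norm_pow _ (pow_nonneg hl0 _)
      (hA.pow_le_norm_pow_map_ofReal (pow_nonneg hl0 _) he₀ (by simp))

theorem lozi_word_expansion_and_spectral_radius (a b : ℝ) (hab : a > b + 1) (hb0 : 0 ≤ b)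
    (hb1 : b ≤ 1) (I : List ℝ) (hI : ∀ σ ∈ I, σ = -1 ∨ σ = 1) (hlen : 1 ≤ I.length) :
    let l := (a + Real.sqrt (a ^ 2 - 4 * b)) / 2
    let A : Matrix (Fin 2) (Fin 2) ℝ :=
      (I.reverse.map (fun σ => !![-σ * a, -b; 1, 0])).prod
    (∀ m : ℕ, ∀ v : Fin 2 → ℝ, |v 1| ≤ |v 0| / l →
      l ^ (I.length * m) * max |v 0| |v 1| ≤
        max |((A ^ m).mulVec v) 0| |((A ^ m).mulVec v) 1|) ∧
    (∃ ν : ℂ, ν ∈ spectrum ℂ (A.map (Complex.ofReal : ℝ → ℂ)) ∧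
      l ^ I.length ≤ ‖ν‖) :=
  lozi_word_expansion_and_spectral_radius_general a b hab hb0 I hI
end

section
/- Let b = 0 and a > 1 and consider the tent map T_a(x) = −a|x| + (a − 1). Then the quantities u = a − 1, r_∞ = 1, and r_m = 1 − 2/(a^{m−1}(a+1)) for m ≥ 1 satisfy: there exists c > 0 such that d/da (u − r_m) > c on [7/5, ∞) for every 2 ≤ m < ∞. Explicitly, d/da(u − r_m) = 1 − (2(m−1))/(a^m (a+1)) − 2/(a^{m−1}(a+1)²) > 0 for all a ≥ 7/5 and m ≥ 2. -/
/-! For `a ≥ 7/5` both negative terms of the derivative are bounded uniformly in `m`.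
The key estimate is `m - 1 ≤ (4/5) (7/5)^m` for `m ≥ 2`, a discrete stand-in for
`(x - 1) / a^x ≤ 1 / (e a log a)`: `(m - 1) (5/7)^m` peaks at `m = 4` with value `≈ 0.78`.
It gives `2 (m - 1) / (a^m (a + 1)) ≤ 2/3`, while `2 / (a^(m-1) (a + 1)^2) ≤ 125/504`,
so the derivative is at least `1 - 2/3 - 125/504 = 43/504`. -/

lemma hasDerivAt_two_div_pow_mul_add_one (n : ℕ) {a : ℝ} (ha : a ≠ 0) (ha₁ : a + 1 ≠ 0) :
    HasDerivAt (fun t : ℝ => 2 / (t ^ n * (t + 1)))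
      (-(2 * n / (a ^ (n + 1) * (a + 1))) - 2 / (a ^ n * (a + 1) ^ 2)) a := by
  have hg : HasDerivAt (fun t : ℝ => t ^ n * (t + 1)) (n * a ^ (n - 1) * (a + 1) + a ^ n) a := by
    simpa using (hasDerivAt_pow n a).fun_mul ((hasDerivAt_id a).add_const 1)
  refine ((hasDerivAt_const a (2 : ℝ)).fun_div hg (by positivity)).congr_deriv ?_
  rcases n with _ | n
  · field_simp; ring
  · rw [Nat.add_sub_cancel]; push_cast; field_simp; ring

lemma hasDerivAt_tent_gap {m : ℕ} (hm : 1 ≤ m) {a : ℝ} (ha : a ≠ 0) (ha₁ : a + 1 ≠ 0) :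
    HasDerivAt (fun t : ℝ => (t - 1) - (1 - 2 / (t ^ (m - 1) * (t + 1))))
      (1 - 2 * ((m : ℝ) - 1) / (a ^ m * (a + 1)) - 2 / (a ^ (m - 1) * (a + 1) ^ 2)) a := by
  have h := ((hasDerivAt_id' a).sub_const 1).fun_sub
    ((hasDerivAt_const a (1 : ℝ)).fun_sub (hasDerivAt_two_div_pow_mul_add_one (m - 1) ha ha₁))
  rw [Nat.sub_add_cancel hm, Nat.cast_sub hm] at h
  refine h.congr_deriv ?_
  push_cast; ring

lemma sub_one_le_pow_seven_fifths {m : ℕ} (hm : 2 ≤ m) : (m : ℝ) - 1 ≤ 4 / 5 * (7 / 5) ^ m := by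
  obtain rfl | rfl | h : m = 2 ∨ m = 3 ∨ 4 ≤ m := by omega
  · norm_num
  · norm_num
  induction m, h using Nat.le_induction with
  | base => norm_num
  | succ m hm₄ ih =>
    have : (7 / 5 : ℝ) ^ 4 ≤ (7 / 5) ^ m := pow_le_pow_right₀ (by norm_num) hm₄
    push_cast
    rw [pow_succ]
    nlinarith [ih (by omega)]

lemma two_mul_sub_one_div_pow_mul_le {m : ℕ} (hm : 2 ≤ m) {a : ℝ} (ha : 7 / 5 ≤ a) :
    2 * ((m : ℝ) - 1) / (a ^ m * (a + 1)) ≤ 2 / 3 := by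
  have hm' : (m : ℝ) - 1 ≤ 4 / 5 * a ^ m :=
    (sub_one_le_pow_seven_fifths hm).trans (by gcongr)
  have ha₀ : 0 < a := by linarith
  calc 2 * ((m : ℝ) - 1) / (a ^ m * (a + 1))
      ≤ 2 * (4 / 5 * a ^ m) / (a ^ m * (a + 1)) := by gcongr
    _ = 8 / 5 / (a + 1) := by field_simp; ring
    _ ≤ 8 / 5 / (12 / 5) := by gcongr; linarith
    _ = 2 / 3 := by norm_num

lemma two_div_pow_mul_sq_le {n : ℕ} (hn : 1 ≤ n) {a : ℝ} (ha : 7 / 5 ≤ a) :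
    2 / (a ^ n * (a + 1) ^ 2) ≤ 125 / 504 := by
  have hpow : 7 / 5 ≤ a ^ n := ha.trans (le_self_pow₀ (by linarith) (by omega))
  calc 2 / (a ^ n * (a + 1) ^ 2) ≤ 2 / (7 / 5 * (12 / 5) ^ 2) := by gcongr; linarith
    _ = 125 / 504 := by norm_num

theorem tent_increasing_critical_value :
    ∃ c > (0 : ℝ), ∀ m : ℕ, 2 ≤ m → ∀ a : ℝ, 7 / 5 ≤ a →
      HasDerivAt (fun t : ℝ => (t - 1) - (1 - 2 / (t ^ (m - 1) * (t + 1))))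
        (1 - 2 * ((m : ℝ) - 1) / (a ^ m * (a + 1)) - 2 / (a ^ (m - 1) * (a + 1) ^ 2)) a ∧
      c < 1 - 2 * ((m : ℝ) - 1) / (a ^ m * (a + 1)) - 2 / (a ^ (m - 1) * (a + 1) ^ 2) ∧
      0 < 1 - 2 * ((m : ℝ) - 1) / (a ^ m * (a + 1)) - 2 / (a ^ (m - 1) * (a + 1) ^ 2) := by
  refine ⟨1 / 12, by norm_num, fun m hm a ha => ?_⟩
  have h₁ := two_mul_sub_one_div_pow_mul_le hm ha
  have h₂ := two_div_pow_mul_sq_le (n := m - 1) (by omega) ha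
  exact ⟨hasDerivAt_tent_gap (by omega) (by positivity) (by positivity), by linarith, by linarith⟩
end

section
/- Let b = 0, a > 1, u = a − 1, r_m = 1 − 2/(a^{m−1}(a+1)) for 1 ≤ m < ∞, r_∞ = 1. Then: (1) u = r₂ if and only if a = √2; (2) for a < √2 (and a > 1), u < r₂; (3) u = r_∞ if and only if a = 2; (4) for each m ≥ 2, the equation u = r_m, i.e. a − 2 + 2/(a^{m−1}(a+1)) = 0, has a unique solution a_m in (√2, 2) when m ≥ 3, and the sequence (a_m) is strictly increasing with a₂ = √2 and a_m → 2. -/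
/-!
The condition `u = r_m` says that the gap `h_m(a) = a - 2 + 2 / (a^(m-1) (a+1))` vanishes. For `m = 2`
the gap factors as `(a - 1)(a² - 2) / (a (a + 1))`. For every `m ≥ 2` it is strictly increasing on
`[√2, ∞)`, because its derivative `1 - 2 F' / F²`, with `F = a^(m-1) (a+1)`, is positive as soon as
`a^m (a + 1) > 2m`, which holds once `a² ≥ 2`. Since `h_m(√2) ≤ 0 < h_m(2)`, each `h_m` has a unique
zero `a_m ∈ [√2, 2)`. The gaps decrease strictly in `m`, so `a_m < a_(m+1)`, and `a_m` is squeezed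
against `2` by `2 - a_m = 2 / F(a_m) < 2 / m`.
-/

open Set Filter Topology

namespace TentMap

noncomputable def gap (m : ℕ) (a : ℝ) : ℝ := a - 2 + 2 / (a ^ (m - 1) * (a + 1))

lemma two_mul_lt_pow_mul_add_one {a : ℝ} (ha : 1 < a) (ha2 : 2 ≤ a ^ 2) {m : ℕ} (hm : 2 ≤ m) :
    2 * m < a ^ m * (a + 1) := by
  induction m using Nat.strong_induction_on with
  | _ m ih =>
    rcases (show m = 2 ∨ m = 3 ∨ 4 ≤ m by omega) with rfl | rfl | hm4
    · push_cast; nlinarith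
    · push_cast; nlinarith
    · obtain ⟨j, rfl⟩ : ∃ j, m = j + 2 := ⟨m - 2, by omega⟩
      have hj : (2 : ℝ) ≤ j := by exact_mod_cast (show 2 ≤ j by omega)
      have ih := ih j (by omega) (by omega)
      calc (2 : ℝ) * ↑(j + 2) ≤ 2 * (2 * j) := by push_cast; linarith
        _ < 2 * (a ^ j * (a + 1)) := by linarith
        _ ≤ a ^ 2 * (a ^ j * (a + 1)) := by gcongr
        _ = a ^ (j + 2) * (a + 1) := by ring

lemma gap_two_eq {a : ℝ} (ha : 0 < a) : gap 2 a = (a - 1) * (a ^ 2 - 2) / (a * (a + 1)) := by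
  rw [gap, eq_div_iff (by positivity)]
  norm_num
  field_simp
  ring

lemma gap_two_eq_zero_iff {a : ℝ} (ha : 1 < a) : gap 2 a = 0 ↔ a = √2 := by
  have ha0 : 0 < a := by linarith
  rw [gap_two_eq ha0, div_eq_zero_iff, or_iff_left (by positivity), mul_eq_zero,
    or_iff_right (by linarith), sub_eq_zero]
  constructor
  · intro h
    rw [← h, Real.sqrt_sq ha0.le]
  · rintro rfl
    exact Real.sq_sqrt zero_le_two

lemma gap_two_neg {a : ℝ} (ha : 1 < a) (has : a < √2) : gap 2 a < 0 := by
  have ha0 : 0 < a := by linarith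
  have ha2 : a ^ 2 < 2 := (Real.lt_sqrt ha0.le).1 has
  rw [gap_two_eq ha0]
  exact div_neg_of_neg_of_pos (mul_neg_of_pos_of_neg (by linarith) (by linarith)) (by positivity)

lemma gap_two_sqrt_two : gap 2 √2 = 0 := (gap_two_eq_zero_iff Real.one_lt_sqrt_two).2 rfl

lemma gap_lt_gap_of_lt {a : ℝ} (ha : 1 < a) {m m' : ℕ} (hm : 1 ≤ m) (hmm' : m < m') :
    gap m' a < gap m a := by
  have hpow : a ^ (m - 1) < a ^ (m' - 1) := pow_lt_pow_right₀ ha (by omega)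
  have hpos : 0 < a ^ (m - 1) * (a + 1) := by positivity
  have : 2 / (a ^ (m' - 1) * (a + 1)) < 2 / (a ^ (m - 1) * (a + 1)) :=
    div_lt_div_of_pos_left two_pos hpos (by gcongr)
  simp only [gap]
  linarith

lemma gap_sqrt_two_neg {m : ℕ} (hm : 3 ≤ m) : gap m √2 < 0 :=
  gap_two_sqrt_two ▸ gap_lt_gap_of_lt Real.one_lt_sqrt_two one_le_two hm

lemma gap_sqrt_two_nonpos {m : ℕ} (hm : 2 ≤ m) : gap m √2 ≤ 0 := by
  rcases hm.eq_or_lt with rfl | hm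
  · exact gap_two_sqrt_two.le
  · exact (gap_sqrt_two_neg hm).le

lemma gap_two_pos (m : ℕ) : 0 < gap m 2 := by
  simp only [gap]
  have : 0 < 2 / ((2 : ℝ) ^ (m - 1) * (2 + 1)) := by positivity
  linarith

lemma continuousOn_gap (m : ℕ) : ContinuousOn (gap m) (Ioi 0) :=
  (continuousOn_id.sub continuousOn_const).add
    (continuousOn_const.div (by fun_prop) fun x (hx : 0 < x) => by positivity)

lemma hasDerivAt_gap (k : ℕ) {x : ℝ} (hx : 0 < x) :
    HasDerivAt (gap (k + 2))
      (1 - 2 * ((k + 1) * x ^ k * (x + 1) + x ^ (k + 1)) / (x ^ (k + 1) * (x + 1)) ^ 2) x := by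
  have hne : x ^ (k + 1) * (x + 1) ≠ 0 := by positivity
  refine (((hasDerivAt_id' x).sub_const 2).add ((hasDerivAt_const x (2 : ℝ)).div
    ((hasDerivAt_pow (k + 1) x).mul ((hasDerivAt_id' x).add_const 1)) hne)).congr_deriv ?_
  simp only [Pi.mul_apply, Nat.add_sub_cancel]
  push_cast
  ring

lemma gap_strictMonoOn {m : ℕ} (hm : 2 ≤ m) : StrictMonoOn (gap m) (Ici √2) := by
  obtain ⟨k, rfl⟩ : ∃ k, m = k + 2 := ⟨m - 2, by omega⟩
  have hpos : ∀ x ∈ Ici √2, 0 < x := fun x hx => Real.sqrt_pos.2 two_pos |>.trans_le hx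
  refine strictMonoOn_of_deriv_pos (convex_Ici _)
    (fun x hx => ((hasDerivAt_gap k (hpos x hx)).continuousAt).continuousWithinAt) fun x hx => ?_
  rw [interior_Ici] at hx
  have hx0 := hpos x (mem_Ici.2 hx.le)
  have hx1 : 1 < x := Real.one_lt_sqrt_two.trans hx
  have hx2 : 2 ≤ x ^ 2 := ((Real.sqrt_lt' hx0).1 hx).le
  have key := two_mul_lt_pow_mul_add_one hx1 hx2 (m := k + 2) le_add_self
  push_cast at key
  rw [(hasDerivAt_gap k hx0).deriv, sub_pos, div_lt_one (by positivity)]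
  calc 2 * ((k + 1) * x ^ k * (x + 1) + x ^ (k + 1)) = x ^ k * (2 * ((k + 1) * (x + 1) + x)) := by
        ring
    _ < x ^ k * (2 * (k + 2) * (x + 1)) := mul_lt_mul_of_pos_left (by linarith) (by positivity)
    _ < x ^ k * (x ^ (k + 2) * (x + 1) * (x + 1)) :=
        mul_lt_mul_of_pos_left (mul_lt_mul_of_pos_right key (by linarith)) (by positivity)
    _ = (x ^ (k + 1) * (x + 1)) ^ 2 := by ring

lemma exists_gap_eq_zero {m : ℕ} (hm : 2 ≤ m) : ∃ x ∈ Ico √2 2, gap m x = 0 :=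
  intermediate_value_Ico (Real.sqrt_two_lt_three_halves.trans (by norm_num)).le
    ((continuousOn_gap m).mono fun _ hx => (Real.sqrt_pos.2 two_pos).trans_le hx.1)
    ⟨gap_sqrt_two_nonpos hm, gap_two_pos m⟩

noncomputable def root (m : ℕ) : ℝ := Function.invFunOn (gap m) (Ico √2 2) 0

lemma root_spec {m : ℕ} (hm : 2 ≤ m) : root m ∈ Ico √2 2 ∧ gap m (root m) = 0 :=
  Function.invFunOn_pos (exists_gap_eq_zero hm)

lemma eq_root_of_gap_eq_zero {m : ℕ} (hm : 2 ≤ m) {x : ℝ} (hx : √2 ≤ x) (h : gap m x = 0) :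
    x = root m :=
  (gap_strictMonoOn hm).injOn hx (root_spec hm).1.1 (h.trans (root_spec hm).2.symm)

lemma root_two : root 2 = √2 :=
  (eq_root_of_gap_eq_zero le_rfl le_rfl gap_two_sqrt_two).symm

lemma root_mem_Ioo {m : ℕ} (hm : 3 ≤ m) : root m ∈ Ioo √2 2 := by
  obtain ⟨⟨hle, hlt⟩, hroot⟩ := root_spec (by omega : 2 ≤ m)
  refine ⟨hle.lt_of_ne fun h => ?_, hlt⟩
  have := gap_sqrt_two_neg hm
  rw [h, hroot] at this
  exact this.false

lemma root_lt_root_succ {m : ℕ} (hm : 2 ≤ m) : root m < root (m + 1) := by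
  obtain ⟨hmem, hroot⟩ := root_spec hm
  obtain ⟨hmem', hroot'⟩ := root_spec (by omega : 2 ≤ m + 1)
  refine ((gap_strictMonoOn (by omega : 2 ≤ m + 1)).lt_iff_lt hmem.1 hmem'.1).1 ?_
  calc gap (m + 1) (root m) < gap m (root m) :=
        gap_lt_gap_of_lt (Real.one_lt_sqrt_two.trans_le hmem.1) (by omega) (Nat.lt_succ_self m)
    _ = gap (m + 1) (root (m + 1)) := hroot.trans hroot'.symm

lemma two_sub_root_lt {m : ℕ} (hm : 2 ≤ m) : 2 - root m < 2 / m := by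
  obtain ⟨⟨hle, hlt⟩, hroot⟩ := root_spec hm
  set x := root m
  have hx1 : 1 < x := Real.one_lt_sqrt_two.trans_le hle
  have hx2 : 2 ≤ x ^ 2 := (Real.sqrt_le_left (by linarith)).1 hle
  have key := two_mul_lt_pow_mul_add_one hx1 hx2 hm
  rw [← pow_sub_one_mul (by omega : m ≠ 0)] at key
  have hF : (m : ℝ) < x ^ (m - 1) * (x + 1) := by nlinarith [pow_pos (by linarith : 0 < x) (m - 1)]
  have h2 : 2 - x = 2 / (x ^ (m - 1) * (x + 1)) := by simp only [gap] at hroot; linarith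
  rw [h2]
  exact div_lt_div_of_pos_left two_pos (by positivity) hF

lemma tendsto_root : Tendsto root atTop (𝓝 2) := by
  have hlow : Tendsto (fun m : ℕ => 2 - 2 / (m : ℝ)) atTop (𝓝 2) := by
    simpa using tendsto_const_nhds.sub (tendsto_const_div_atTop_nhds_zero_nat (2 : ℝ))
  refine tendsto_of_tendsto_of_tendsto_of_le_of_le' hlow tendsto_const_nhds ?_ ?_
  all_goals filter_upwards [eventually_ge_atTop 2] with m hm
  · linarith [two_sub_root_lt hm]
  · exact (root_spec hm).1.2.le

end TentMap

open TentMap in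
theorem tent_map_geometry :
    let u : ℝ → ℝ := fun a => a - 1
    let r : ℕ → ℝ → ℝ := fun m a => 1 - 2 / (a ^ (m - 1) * (a + 1))
    (∀ a : ℝ, 1 < a → (u a = r 2 a ↔ a = Real.sqrt 2)) ∧
    (∀ a : ℝ, 1 < a → a < Real.sqrt 2 → u a < r 2 a) ∧
    (∀ a : ℝ, 1 < a → (u a = 1 ↔ a = 2)) ∧
    (∃ A : ℕ → ℝ, A 2 = Real.sqrt 2 ∧
      (∀ m : ℕ, 2 ≤ m → u (A m) = r m (A m)) ∧
      (∀ m : ℕ, 3 ≤ m → A m ∈ Set.Ioo (Real.sqrt 2) 2 ∧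
        ∀ x ∈ Set.Ioo (Real.sqrt 2) 2, u x = r m x → x = A m) ∧
      (∀ m : ℕ, 2 ≤ m → A m < A (m + 1)) ∧
      Filter.Tendsto A Filter.atTop (nhds 2)) := by
  intro u r
  have hgap : ∀ m a, u a - r m a = gap m a := fun m a => by simp only [u, r, gap]; ring
  have hroot : ∀ m a, u a = r m a ↔ gap m a = 0 := fun m a => by rw [← hgap, sub_eq_zero]
  refine ⟨fun a ha => ?_, fun a ha has => ?_, fun a _ => ?_, root, root_two,
    fun m hm => (hroot m _).2 (root_spec hm).2,
    fun m hm => ⟨root_mem_Ioo hm, fun x hx hux =>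
      eq_root_of_gap_eq_zero (by omega) hx.1.le ((hroot m x).1 hux)⟩,
    fun m hm => root_lt_root_succ hm, tendsto_root⟩
  · rw [hroot, gap_two_eq_zero_iff ha]
  · rw [← sub_neg, hgap]
    exact gap_two_neg ha has
  · constructor <;> intro h <;> simp only [u] at h ⊢ <;> linarith
end

section
/- Suppose a > 3b + 1 and 0 ≤ b ≤ 1, and define λ = (a + √(a² − 4b))/2, u_∞ = λ − 1, and r₂ = the x-coordinate determined by the formula r₂ = [(1 − s₂/λ)(1 + 1/(λ+1)) − b/λ]·(λ−1)/(a + s₂) with s₂ ∈ [−b/λ, b/λ]. If a < √2(1 − 3b), then u_∞ < r₂. -/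
/-! Using `λ² = aλ - b`, the difference `r₂ - u_∞` equals `(λ - 1) Q / (λ (λ + 1) (a + s₂))` with
`Q = 2λ - λ³ - 2bλ - 2b - s₂ (λ² + 2λ + 2)` (`r₂Numerator`). The bound `s₂ ≤ b / λ` gives
`Q ≥ λ (2 - λ² - 9b)`, and `λ ≤ a < √2 (1 - 3b)` makes `2 - λ² - 9b > 3b (1 - 6b) ≥ 0`. -/

namespace Lozi

/-- The expanding eigenvalue `λ` of the Lozi map at its fixed points. -/
noncomputable def eigenvalue (a b : ℝ) : ℝ := (a + √(a ^ 2 - 4 * b)) / 2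

/-- The abscissa `r₂` of `γ₂` on the `x`-axis, in terms of `λ` and the slope `s` of `γ₂`. -/
noncomputable def r₂ (a b l s : ℝ) : ℝ :=
  ((1 - s / l) * (1 + 1 / (l + 1)) - b / l) * (l - 1) / (a + s)

theorem eigenvalue_sq {a b : ℝ} (h : 4 * b ≤ a ^ 2) :
    eigenvalue a b ^ 2 = a * eigenvalue a b - b := by
  have hsq := Real.sq_sqrt (sub_nonneg.2 h)
  unfold eigenvalue
  linear_combination hsq / 4

theorem eigenvalue_le {a b : ℝ} (ha : 0 ≤ a) (hb : 0 ≤ b) : eigenvalue a b ≤ a := by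
  have : √(a ^ 2 - 4 * b) ≤ a := Real.sqrt_le_iff.2 ⟨ha, by nlinarith⟩
  unfold eigenvalue
  linarith

theorem one_lt_eigenvalue {a b : ℝ} (h : b + 1 < a) : 1 < eigenvalue a b := by
  have : 2 - a < √(a ^ 2 - 4 * b) := by
    rcases lt_or_ge (2 - a) 0 with ha | ha
    · exact ha.trans_le (Real.sqrt_nonneg _)
    · exact (Real.lt_sqrt ha).2 (by nlinarith)
  unfold eigenvalue
  linarith

def r₂Numerator (b l s : ℝ) : ℝ := 2 * l - l ^ 3 - 2 * b * l - 2 * b - s * (l ^ 2 + 2 * l + 2)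

theorem r₂_sub_eq {a b l s : ℝ} (hl : l ≠ 0) (hl' : l + 1 ≠ 0) (has : a + s ≠ 0)
    (hchar : l ^ 2 = a * l - b) :
    r₂ a b l s - (l - 1) = (l - 1) * r₂Numerator b l s / (l * (l + 1) * (a + s)) := by
  unfold r₂ r₂Numerator
  field_simp
  linear_combination (l - 1) * (l + 1) * hchar

theorem mul_le_r₂Numerator {b l s : ℝ} (hl : 1 ≤ l) (hb : 0 ≤ b) (hs : s ≤ b / l) :
    l * (2 - l ^ 2 - 9 * b) ≤ r₂Numerator b l s := by
  unfold r₂Numerator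
  have hsl : s * l ≤ b := (le_div_iff₀ (by linarith)).1 hs
  nlinarith [mul_le_mul_of_nonneg_right hsl (by linarith : (0 : ℝ) ≤ l + 2),
    mul_le_mul_of_nonneg_left (sub_nonneg.2 hl) hb]

end Lozi

open Lozi in
theorem lozi_period_doubling_renormalizable_general (a b : ℝ) (hab : a > 3 * b + 1) (hb0 : 0 ≤ b)
    (ha : a < Real.sqrt 2 * (1 - 3 * b)) :
    let l := (a + Real.sqrt (a ^ 2 - 4 * b)) / 2
    ∀ s₂ ∈ Set.Icc (-(b / l)) (b / l),
      l - 1 < ((1 - s₂ / l) * (1 + 1 / (l + 1)) - b / l) * (l - 1) / (a + s₂) := by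
  show ∀ s ∈ Set.Icc (-(b / eigenvalue a b)) (b / eigenvalue a b),
    eigenvalue a b - 1 < r₂ a b (eigenvalue a b) s
  rintro s ⟨hs_lo, hs_hi⟩
  set l := eigenvalue a b
  have hsqrt2 : √2 < 3 / 2 := (Real.sqrt_lt' (by norm_num)).2 (by norm_num)
  have h3b : 0 < 1 - 3 * b := by nlinarith [Real.sqrt_nonneg 2]
  have hb : b < 1 / 6 := by nlinarith [mul_lt_mul_of_pos_right hsqrt2 h3b]
  have hl : 1 < l := one_lt_eigenvalue (by linarith)
  have hla : l ≤ a := eigenvalue_le (by linarith) hb0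
  have hl_sq : l ^ 2 < 2 * (1 - 3 * b) ^ 2 := by
    calc l ^ 2 < (√2 * (1 - 3 * b)) ^ 2 :=
          pow_lt_pow_left₀ (hla.trans_lt ha) (by linarith) two_ne_zero
      _ = 2 * (1 - 3 * b) ^ 2 := by rw [mul_pow, Real.sq_sqrt zero_le_two]
  have hgap : 0 < 2 - l ^ 2 - 9 * b := by nlinarith
  have has : 0 < a + s := by
    have : b / l ≤ b := div_le_self hb0 hl.le
    linarith
  rw [← sub_pos,
    r₂_sub_eq (by positivity) (by positivity) has.ne' (eigenvalue_sq (by nlinarith))]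
  have hQ := (mul_pos (by positivity) hgap).trans_le (mul_le_r₂Numerator hl.le hb0 hs_hi)
  exact div_pos (mul_pos (sub_pos.2 hl) hQ) (by positivity)

theorem lozi_period_doubling_renormalizable (a b : ℝ) (hab : a > 3 * b + 1) (hb0 : 0 ≤ b)
    (hb1 : b ≤ 1) (ha : a < Real.sqrt 2 * (1 - 3 * b)) :
    let l := (a + Real.sqrt (a ^ 2 - 4 * b)) / 2
    ∀ s₂ ∈ Set.Icc (-(b / l)) (b / l),
      l - 1 < ((1 - s₂ / l) * (1 + 1 / (l + 1)) - b / l) * (l - 1) / (a + s₂) :=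
  lozi_period_doubling_renormalizable_general a b hab hb0 ha
end

section
/- Suppose a > 3b + 1 and 0 ≤ b ≤ 1, λ = (a + √(a² − 4b))/2, μ = b/λ. Define h(s) = (b + 2s)/(a + s). Then for all s ∈ [−μ, μ], h'(s) = (2a − b)/(a + s)² ≤ (9/4)/λ. -/
/-!
The larger root `λ` of `x² - a x + b` satisfies `a - b/λ = λ`, so `a + s ≥ λ` on `[-b/λ, b/λ]` and
`(2a - b)/(a + s)² ≤ 2a/λ² = (2/λ)(1 + b/λ²)`. The hypothesis `a > 3b + 1` forces `λ² ≥ 8b`,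
which turns this into `(2/λ)(9/8) = 9/(4λ)`.
-/

namespace Lozi

lemma largerRoot_sq (a b : ℝ) (hdisc : 0 ≤ a ^ 2 - 4 * b) :
    ((a + √(a ^ 2 - 4 * b)) / 2) ^ 2 = a * ((a + √(a ^ 2 - 4 * b)) / 2) - b := by
  have := Real.sq_sqrt hdisc
  linear_combination this / 4

lemma half_le_largerRoot (a b : ℝ) : a / 2 ≤ (a + √(a ^ 2 - 4 * b)) / 2 := by
  linarith [Real.sqrt_nonneg (a ^ 2 - 4 * b)]

section Root

variable {a b l : ℝ}

lemma sub_div_eq_of_sq_eq (hl : l ≠ 0) (hroot : l ^ 2 = a * l - b) : a - b / l = l := by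
  field_simp
  linear_combination -hroot

/-- Since `b (3λ - 1) < λ² - λ`, this reduces to `λ (3λ² - 9λ + 8) ≥ 0`, whose quadratic factor
has negative discriminant. -/
lemma eight_mul_le_sq_of_sq_eq (hroot : l ^ 2 = a * l - b) (hab : a > 3 * b + 1)
    (hl : 1 / 3 < l) : 8 * b ≤ l ^ 2 := by
  have hb : b * (3 * l - 1) < l ^ 2 - l := by nlinarith
  have hcubic : 0 ≤ l * (3 * l ^ 2 - 9 * l + 8) := by
    have : 0 < 3 * l ^ 2 - 9 * l + 8 := by nlinarith [sq_nonneg (2 * l - 3)]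
    positivity
  nlinarith

lemma div_sq_le_of_sq_eq (hb : 0 ≤ b) (hl : 0 < l) (hroot : l ^ 2 = a * l - b)
    (h8 : 8 * b ≤ l ^ 2) {s : ℝ} (hs : l ≤ a + s) :
    (2 * a - b) / (a + s) ^ 2 ≤ (9 / 4) / l := by
  have ha : a = l + b / l := by linarith [sub_div_eq_of_sq_eq hl.ne' hroot]
  have hbl : b / l ^ 2 ≤ 1 / 8 := by rw [div_le_iff₀ (by positivity)]; linarith
  calc (2 * a - b) / (a + s) ^ 2 ≤ 2 * a / l ^ 2 := by
        gcongr
        · nlinarith [div_nonneg hb hl.le]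
        · linarith
    _ = 2 / l * (1 + b / l ^ 2) := by rw [ha]; field_simp
    _ ≤ 2 / l * (1 + 1 / 8) := by gcongr
    _ = (9 / 4) / l := by ring

end Root

end Lozi

open Lozi in
theorem lozi_remaining_term_bound_general (a b : ℝ) (hab : a > 3 * b + 1) (hb0 : 0 ≤ b) :
    let l := (a + Real.sqrt (a ^ 2 - 4 * b)) / 2
    let μ := b / l
    ∀ s ∈ Set.Icc (-μ) μ, (2 * a - b) / (a + s) ^ 2 ≤ (9 / 4) / l := by
  intro l μ s hs
  have hroot : l ^ 2 = a * l - b := largerRoot_sq a b (by nlinarith)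
  have hl : a / 2 ≤ l := half_le_largerRoot a b
  have hlpos : 0 < l := by linarith
  have hs' : l ≤ a + s := by
    linarith [sub_div_eq_of_sq_eq hlpos.ne' hroot, hs.1]
  exact div_sq_le_of_sq_eq hb0 hlpos hroot (eight_mul_le_sq_of_sq_eq hroot hab (by linarith)) hs'

theorem lozi_remaining_term_bound (a b : ℝ) (hab : a > 3 * b + 1) (hb0 : 0 ≤ b) (hb1 : b ≤ 1) :
    let l := (a + Real.sqrt (a ^ 2 - 4 * b)) / 2
    let μ := b / l
    ∀ s ∈ Set.Icc (-μ) μ, (2 * a - b) / (a + s) ^ 2 ≤ (9 / 4) / l :=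
  lozi_remaining_term_bound_general a b hab hb0
end

section
/- Suppose a > 3b + 1 and 0 ≤ b ≤ 1, λ = (a + √(a² − 4b))/2. For the logistic-type convergence factor: there is a constant c = (64/7)·ln 2 < 6.4 such that for every σ ∈ {−1,+1}, every s ∈ [−1/λ, 1/λ], and every m ≥ 1, setting s_m = f_σ^m(s) with f_σ(t) = −1/(bt + σa) and s_∞ = −σ/λ, one has (1 − c·b/λ²)·(b/λ²)^m·|s − s_∞| ≤ |s_m − s_∞| ≤ (b/λ²)^m·|s − s_∞|. -/
/-!
Reduce to `σ = 1` by the conjugation `t ↦ σ t`; the fixed point is then `-1 / λ`. Using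
`λ ^ 2 = a λ - b`, the distance `e = t + 1 / λ ≥ 0` to the fixed point is mapped by
`e ↦ q e / (1 + (b / λ) e)` with `q = b / λ ^ 2`, a Möbius map which is affine in `1 / e`.
Hence `e_m = q ^ m e / (1 + (b / λ) e ∑_{k < m} q ^ k)` exactly. Since `e ≤ 2 / λ` and
`q ≤ 1 / 8`, the denominator lies in `[1, 1 + 16 q / 7]`, and `16 / 7 ≤ c`.
-/

open Finset

variable {a b l s t σ : ℝ}

theorem sq_quadratic_root (h : 4 * b ≤ a ^ 2) :
    ((a + √(a ^ 2 - 4 * b)) / 2) ^ 2 = a * ((a + √(a ^ 2 - 4 * b)) / 2) - b := by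
  linear_combination Real.sq_sqrt (sub_nonneg.2 h) / 4

theorem eight_mul_lt_sq (hab : 3 * b + 1 < a) (hb : 0 ≤ b) (hlab : l ^ 2 = a * l - b)
    (hla : a / 2 ≤ l) : 8 * b < l ^ 2 := by
  -- `a - l = b / l ≤ 2 b / a`, so `l ^ 2 ≥ a ^ 2 - 3 b > 9 b ^ 2 + 3 b + 1`
  have : a ^ 2 - 3 * b ≤ l ^ 2 := by nlinarith
  nlinarith [sq_nonneg (3 * b - 1)]

theorem semiconj_mul_neg_inv (hσ : σ * σ = 1) (a b : ℝ) :
    Function.Semiconj (σ * ·) (fun t => -1 / (b * t + a)) (fun t => -1 / (b * t + σ * a)) := by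
  intro t
  have hden : b * (σ * t) + σ * a = σ * (b * t + a) := by ring
  show σ * (-1 / (b * t + a)) = -1 / (b * (σ * t) + σ * a)
  rw [hden, div_mul_eq_div_div_swap, div_eq_mul_inv _ σ, inv_eq_of_mul_eq_one_right hσ, mul_comm]

theorem iterate_neg_inv_sub_eq (hσ : σ * σ = 1) (s : ℝ) (n : ℕ) :
    (fun t => -1 / (b * t + σ * a))^[n] s - -σ / l =
      σ * ((fun t => -1 / (b * t + a))^[n] (σ * s) + 1 / l) := by
  have h := (semiconj_mul_neg_inv hσ a b).iterate_right n (σ * s)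
  rw [← mul_assoc, hσ, one_mul] at h
  rw [mul_add, h]
  ring

theorem neg_inv_add_inv_eq (hl : 0 < l) (hlab : l ^ 2 = a * l - b) (hb : 0 ≤ b)
    (ht : 0 ≤ t + 1 / l) :
    -1 / (b * t + a) + 1 / l = b / l ^ 2 * (t + 1 / l) / (1 + b / l * (t + 1 / l)) := by
  have hden : b * t + a = l + b * (t + 1 / l) := by
    field_simp
    linear_combination -hlab
  rw [hden]
  generalize t + 1 / l = e at ht
  have : 0 < l + b * e := by positivity
  field_simp
  ring

theorem mul_div_div_one_add_mul_div {q r x D : ℝ} (hD : D ≠ 0) :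
    q * (x / D) / (1 + r * (x / D)) = q * x / (D + r * x) := by
  field_simp

theorem iterate_neg_inv_add_inv_eq (hl : 0 < l) (hlab : l ^ 2 = a * l - b) (hb : 0 ≤ b)
    (hs : 0 ≤ s + 1 / l) (n : ℕ) :
    (fun t => -1 / (b * t + a))^[n] s + 1 / l =
      (b / l ^ 2) ^ n * (s + 1 / l) /
        (1 + b / l * (s + 1 / l) * ∑ k ∈ range n, (b / l ^ 2) ^ k) := by
  induction n with
  | zero => simp
  | succ n ih =>
    have hD : 0 < 1 + b / l * (s + 1 / l) * ∑ k ∈ range n, (b / l ^ 2) ^ k := by positivity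
    rw [Function.iterate_succ_apply', neg_inv_add_inv_eq hl hlab hb (ih ▸ by positivity), ih,
      mul_div_div_one_add_mul_div hD.ne', sum_range_succ]
    ring

theorem geom_sum_le_of_le_one_eighth {q : ℝ} (hq₀ : 0 ≤ q) (hq : q ≤ 1 / 8) (n : ℕ) :
    ∑ k ∈ range n, q ^ k ≤ 8 / 7 :=
  calc ∑ k ∈ range n, q ^ k ≤ q ^ 0 / (1 - q) := by
        rw [range_eq_Ico]
        exact geom_sum_Ico_le_of_lt_one hq₀ (by linarith)
    _ ≤ 8 / 7 := by
        rw [div_le_iff₀ (by linarith)]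
        linarith

theorem one_sub_mul_le_div {x y D : ℝ} (hx : 0 ≤ x) (hD : 0 < D) (hDy : D ≤ 1 + y) :
    (1 - y) * x ≤ x / D := by
  rw [le_div_iff₀ hD]
  nlinarith [mul_nonneg hx (sq_nonneg y)]

theorem iterate_neg_inv_add_inv_bounds (hl : 0 < l) (hlab : l ^ 2 = a * l - b) (hb : 0 ≤ b)
    (hq : b / l ^ 2 ≤ 1 / 8) (hs : s ∈ Set.Icc (-(1 / l)) (1 / l)) (n : ℕ) :
    (1 - 16 / 7 * (b / l ^ 2)) * ((b / l ^ 2) ^ n * (s + 1 / l)) ≤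
        (fun t => -1 / (b * t + a))^[n] s + 1 / l ∧
      (fun t => -1 / (b * t + a))^[n] s + 1 / l ≤ (b / l ^ 2) ^ n * (s + 1 / l) := by
  obtain ⟨hs₀, hs₁⟩ := hs
  have he : 0 ≤ s + 1 / l := by linarith
  have hcorr : b / l * (s + 1 / l) * ∑ k ∈ range n, (b / l ^ 2) ^ k ≤ 16 / 7 * (b / l ^ 2) :=
    calc _ ≤ b / l * (1 / l + 1 / l) * (8 / 7) := by
          gcongr
          exact geom_sum_le_of_le_one_eighth (by positivity) hq n
      _ = 16 / 7 * (b / l ^ 2) := by ring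
  rw [iterate_neg_inv_add_inv_eq hl hlab hb he n]
  exact ⟨one_sub_mul_le_div (by positivity) (by positivity) (by linarith),
    div_le_self (by positivity) (by simp only [le_add_iff_nonneg_right]; positivity)⟩

theorem lozi_exponential_convergence_of_slope_general (a b : ℝ) (hab : a > 3 * b + 1) (hb0 : 0 ≤ b) :
    let l := (a + Real.sqrt (a ^ 2 - 4 * b)) / 2
    let c : ℝ := (64 / 7) * Real.log 2
    c < 6.4 ∧
    ∀ σ : ℝ, (σ = -1 ∨ σ = 1) →
      ∀ s ∈ Set.Icc (-(1 / l)) (1 / l), ∀ m : ℕ, 1 ≤ m →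
        (1 - c * (b / l ^ 2)) * (b / l ^ 2) ^ m * |s - (-σ / l)| ≤
          |(fun t : ℝ => -1 / (b * t + σ * a))^[m] s - (-σ / l)| ∧
        |(fun t : ℝ => -1 / (b * t + σ * a))^[m] s - (-σ / l)| ≤
          (b / l ^ 2) ^ m * |s - (-σ / l)| := by
  intro l c
  have hlab : l ^ 2 = a * l - b := sq_quadratic_root (by nlinarith)
  have hla : a / 2 ≤ l := by
    show a / 2 ≤ (a + √(a ^ 2 - 4 * b)) / 2
    linarith [Real.sqrt_nonneg (a ^ 2 - 4 * b)]
  have hl : 0 < l := by linarith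
  have hq : b / l ^ 2 ≤ 1 / 8 := by
    rw [div_le_div_iff₀ (by positivity) (by norm_num)]
    linarith [eight_mul_lt_sq hab hb0 hlab hla]
  have hc : 16 / 7 ≤ c := by simp only [c]; linarith [Real.log_two_gt_d9]
  refine ⟨by simp only [c]; linarith [Real.log_two_lt_d9], fun σ hσ s hs m _ => ?_⟩
  have hσσ : σ * σ = 1 := by rcases hσ with rfl | rfl <;> norm_num
  have hσ₁ : |σ| = 1 := by rcases hσ with rfl | rfl <;> norm_num
  have hσs : σ * s ∈ Set.Icc (-(1 / l)) (1 / l) := by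
    rwa [Set.mem_Icc, ← abs_le, abs_mul, hσ₁, one_mul, abs_le]
  obtain ⟨lower, upper⟩ := iterate_neg_inv_add_inv_bounds hl hlab hb0 hq hσs m
  have he : s - -σ / l = σ * (σ * s + 1 / l) := by linear_combination (-s) * hσσ
  have he₀ : 0 ≤ σ * s + 1 / l := by linarith [hσs.1]
  rw [iterate_neg_inv_sub_eq hσσ, he, abs_mul, abs_mul, hσ₁, one_mul, one_mul, abs_of_nonneg he₀,
    abs_of_nonneg (le_trans (mul_nonneg (by linarith) (by positivity)) lower)]
  refine ⟨le_trans (le_of_eq_of_le (mul_assoc _ _ _) ?_) lower, upper⟩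
  gcongr

theorem lozi_exponential_convergence_of_slope (a b : ℝ) (hab : a > 3 * b + 1) (hb0 : 0 ≤ b)
    (hb1 : b ≤ 1) :
    let l := (a + Real.sqrt (a ^ 2 - 4 * b)) / 2
    let c : ℝ := (64 / 7) * Real.log 2
    c < 6.4 ∧
    ∀ σ : ℝ, (σ = -1 ∨ σ = 1) →
      ∀ s ∈ Set.Icc (-(1 / l)) (1 / l), ∀ m : ℕ, 1 ≤ m →
        (1 - c * (b / l ^ 2)) * (b / l ^ 2) ^ m * |s - (-σ / l)| ≤
          |(fun t : ℝ => -1 / (b * t + σ * a))^[m] s - (-σ / l)| ∧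
        |(fun t : ℝ => -1 / (b * t + σ * a))^[m] s - (-σ / l)| ≤
          (b / l ^ 2) ^ m * |s - (-σ / l)| :=
  lozi_exponential_convergence_of_slope_general a b hab hb0
end
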